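/- arXiv:1104.0290 — 9 statements merged into one kernel-verified Lean document; each statement's English description precedes it below -/
import Mathlib

section
/- Let G be a group and D a divisible subgroup of the center of G. Then there exists a subset A of G that is invariant under conjugation, contains every power of each of its elements, and satisfies G = D·A (every element of G is a product d·a with d ∈ D, a ∈ A) and D ∩ A = {1}. -/
/-- Let `G` be a group and `D` a divisible subgroup of the center of `G`. Then there exists a
subset `A` of `G`, invariant under conjugation, containing every power of its elements, with
`G = D · A` and `D ∩ A = {1}`. -/
theorem stmt_0 {G : Type*} [Group G] (D : Subgroup G)
    (hcen : D ≤ Subgroup.center G)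
    (hdiv : ∀ d ∈ D, ∀ n : ℕ, 0 < n → ∃ e ∈ D, e ^ n = d) :
    ∃ A : Set G,
      (∀ g : G, ∀ a ∈ A, g⁻¹ * a * g ∈ A) ∧
      (∀ a ∈ A, ∀ k : ℕ, 1 ≤ k → a ^ k ∈ A) ∧
      (∀ g : G, ∃ d ∈ D, ∃ a ∈ A, g = d * a) ∧
      (D : Set G) ∩ A = {1} := by
  have hcomm : ∀ d ∈ D, ∀ x : G, d * x = x * d := by
    intro d hd x
    exact (Subgroup.mem_center_iff.mp (hcen hd) x).symm
  refine ⟨{g : G | ∀ k : ℕ, 1 ≤ k → g ^ k ∈ D → g ^ k = 1}, ?_, ?_, ?_, ?_⟩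
  · -- conjugation invariance
    intro g a ha k hk hmem
    have hconj : ∀ m : ℕ, (g⁻¹ * a * g) ^ m = g⁻¹ * a ^ m * g := by
      intro m
      induction m with
      | zero => simp
      | succ n ih => rw [pow_succ, ih, pow_succ]; group
    have hconj := hconj k
    rw [hconj] at hmem ⊢
    have heq : a ^ k = g⁻¹ * a ^ k * g := by
      have := hcomm _ hmem g
      calc a ^ k = g * (g⁻¹ * a ^ k * g) * g⁻¹ := by group
        _ = (g⁻¹ * a ^ k * g) * g * g⁻¹ := by rw [← this]
        _ = g⁻¹ * a ^ k * g := by group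
    have hak : a ^ k ∈ D := heq ▸ hmem
    have := ha k hk hak
    rw [← heq, this]
  · -- closed under powers
    intro a ha k hk m hm hmem
    rw [← pow_mul] at hmem ⊢
    exact ha (k * m) (Nat.one_le_iff_ne_zero.mpr (by positivity)) hmem
  · -- covering
    intro g
    by_cases hex : ∃ k : ℕ, 1 ≤ k ∧ g ^ k ∈ D
    · classical
      obtain ⟨k, hk1, hkD, hmin⟩ :
          ∃ k : ℕ, 1 ≤ k ∧ g ^ k ∈ D ∧ ∀ r, 1 ≤ r → r < k → g ^ r ∉ D := by
        obtain ⟨h1, h2⟩ := Nat.find_spec hex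
        exact ⟨Nat.find hex, h1, h2,
          fun r hr1 hrlt hrD => Nat.find_min hex hrlt ⟨hr1, hrD⟩⟩
      obtain ⟨e, heD, hek⟩ := hdiv _ hkD k hk1
      refine ⟨e, heD, e⁻¹ * g, ?_, by group⟩
      have hce : ∀ x : G, e * x = x * e := hcomm e heD
      have hceg : Commute e g := hce g
      have hpow : ∀ m : ℕ, (e⁻¹ * g) ^ m = e⁻¹ ^ m * g ^ m :=
        fun m => hceg.inv_left.mul_pow m
      have hak : (e⁻¹ * g) ^ k = 1 := by
        rw [hpow, inv_pow, hek, inv_mul_cancel]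
      intro m hm hmD
      have hgm : g ^ m ∈ D := by
        have : g ^ m = e ^ m * (e⁻¹ * g) ^ m := by
          rw [hpow, inv_pow]; group
        rw [this]
        exact D.mul_mem (D.pow_mem heD m) hmD
      have hdvd : k ∣ m := by
        rcases Nat.eq_zero_or_pos (m % k) with h0 | hpos
        · exact Nat.dvd_of_mod_eq_zero h0
        · exfalso
          have hrD : g ^ (m % k) ∈ D := by
            have hmk : g ^ (k * (m / k)) ∈ D := by
              rw [pow_mul]; exact D.pow_mem hkD _
            have : g ^ (m % k) = (g ^ (k * (m / k)))⁻¹ * g ^ m := by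
              rw [eq_inv_mul_iff_mul_eq, ← pow_add]
              congr 1
              exact Nat.div_add_mod m k
            rw [this]
            exact D.mul_mem (D.inv_mem hmk) hgm
          exact hmin _ hpos (Nat.mod_lt m (lt_of_lt_of_le Nat.zero_lt_one hk1)) hrD
      obtain ⟨q, rfl⟩ := hdvd
      rw [pow_mul, hak, one_pow]
    · push_neg at hex
      exact ⟨1, one_mem D, g, fun k hk hkD => absurd hkD (hex k hk), by group⟩
  · -- D ∩ A = {1}
    ext x
    simp only [Set.mem_inter_iff, Set.mem_singleton_iff, SetLike.mem_coe, Set.mem_setOf_eq]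
    constructor
    · rintro ⟨hxD, hxA⟩
      have := hxA 1 le_rfl (by simpa using hxD)
      simpa using this
    · rintro rfl
      exact ⟨one_mem D, fun k hk _ => one_pow k⟩
end

section
/- There is no infinite group of finite exponent in which all non-identity elements form a single conjugacy class. -/
private lemma conj_pow_aux {G : Type*} [Group G] (g x : G) (n : ℕ) :
    g⁻¹ * x ^ n * g = (g⁻¹ * x * g) ^ n := by
  induction n with
  | zero => simp
  | succ k ih => rw [pow_succ, pow_succ, ← ih]; group

/-- There is no infinite group of finite exponent in which all non-identity elements form a
single conjugacy class. -/
theorem stmt_2 {G : Type*} [Group G] [Infinite G]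
    (hexp : ∃ n : ℕ, 0 < n ∧ ∀ x : G, x ^ n = 1)
    (hconj : ∀ x y : G, x ≠ 1 → y ≠ 1 → ∃ g : G, g⁻¹ * x * g = y) :
    False := by
  classical
  obtain ⟨n, hn, hpow⟩ := hexp
  obtain ⟨x, hx⟩ := exists_ne (1 : G)
  have hfin : ∀ g : G, IsOfFinOrder g := fun g =>
    isOfFinOrder_iff_pow_eq_one.mpr ⟨n, hn, hpow g⟩
  -- all nonidentity elements have the same order as x
  have horder : ∀ y : G, y ≠ 1 → orderOf y = orderOf x := by
    intro y hy
    obtain ⟨g, hg⟩ := hconj x y hx hy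
    have hsc : SemiconjBy g⁻¹ x y := by
      unfold SemiconjBy
      rw [← hg]; group
    exact (hsc.orderOf_eq).symm
  have hm1 : orderOf x ≠ 1 := fun h => hx (orderOf_eq_one_iff.mp h)
  have hmpos : 0 < orderOf x := (hfin x).orderOf_pos
  have hpprime : (orderOf x).minFac.Prime := Nat.minFac_prime hm1
  -- the order of x is prime
  have hmp : orderOf x = (orderOf x).minFac := by
    have hdvd : (orderOf x).minFac ∣ orderOf x := Nat.minFac_dvd _
    have hlt : orderOf x / (orderOf x).minFac < orderOf x :=
      Nat.div_lt_self hmpos hpprime.one_lt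
    have hqpos : 0 < orderOf x / (orderOf x).minFac :=
      Nat.div_pos (Nat.minFac_le hmpos) hpprime.pos
    have hy1 : (x ^ (orderOf x / (orderOf x).minFac)) ≠ 1 := by
      intro h
      have hd : orderOf x ∣ orderOf x / (orderOf x).minFac :=
        orderOf_dvd_of_pow_eq_one h
      have := Nat.le_of_dvd hqpos hd
      omega
    have h2 := horder _ hy1
    rw [orderOf_pow_of_dvd hqpos.ne' (Nat.div_dvd_of_dvd hdvd),
      Nat.div_div_self hdvd hmpos.ne'] at h2
    omega
  rcases eq_or_ne (orderOf x).minFac 2 with hp2 | hp2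
  · -- order 2 case: the group is abelian, hence has at most 2 elements
    have hsq : ∀ g : G, g * g = 1 := by
      intro g
      rcases eq_or_ne g 1 with rfl | hg
      · simp
      · have h2 : orderOf g = 2 := by rw [horder g hg, hmp, hp2]
        have := pow_orderOf_eq_one g
        rw [h2, pow_two] at this
        exact this
    have hinv : ∀ g : G, g⁻¹ = g := fun g => by
      rw [inv_eq_iff_mul_eq_one, hsq]
    have hcomm : ∀ a b : G, a * b = b * a := by
      intro a b
      have h := hinv (a * b)
      rw [mul_inv_rev, hinv a, hinv b] at h
      exact h.symm
    obtain ⟨a, ha⟩ := Infinite.exists_notMem_finset ({1, x} : Finset G)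
    simp only [Finset.mem_insert, Finset.mem_singleton, not_or] at ha
    obtain ⟨g, hg⟩ := hconj x a hx ha.1
    apply ha.2
    rw [← hg, hcomm g⁻¹ x]
    group
  · -- odd prime order case
    have hx2 : x * x ≠ 1 := by
      intro h
      have hd : orderOf x ∣ 2 := orderOf_dvd_of_pow_eq_one (by rw [pow_two]; exact h)
      rw [hmp] at hd
      exact hp2 ((Nat.prime_dvd_prime_iff_eq hpprime Nat.prime_two).mp hd)
    obtain ⟨g, hg⟩ : ∃ g : G, g⁻¹ * x * g = x ^ 2 := by
      obtain ⟨g, hg⟩ := hconj x (x * x) hx hx2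
      exact ⟨g, by rw [hg, pow_two]⟩
    have key : ∀ k : ℕ, (g ^ k)⁻¹ * x * g ^ k = x ^ (2 ^ k) := by
      intro k
      induction k with
      | zero => simp
      | succ j ih =>
        have h1 : (g ^ (j+1))⁻¹ * x * g ^ (j+1) = g⁻¹ * ((g ^ j)⁻¹ * x * g ^ j) * g := by
          rw [pow_succ]; group
        rw [h1, ih, conj_pow_aux, hg, ← pow_mul]
        congr 1
        rw [pow_succ]
        ring
    have hgne : g ≠ 1 := by
      intro h
      rw [h] at hg
      simp only [inv_one, one_mul, mul_one] at hg
      rw [pow_two] at hg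
      have h' : x * 1 = x * x := by rw [mul_one]; exact hg
      exact hx (mul_left_cancel h').symm
    have hog : orderOf g = orderOf x := horder g hgne
    have hgp : g ^ (orderOf x).minFac = 1 := by
      rw [← hmp, ← hog]; exact pow_orderOf_eq_one g
    have hfix : x ^ (2 ^ (orderOf x).minFac) = x := by
      have := key (orderOf x).minFac
      rw [hgp] at this
      simpa using this.symm
    have h1 : (1:ℕ) ≤ 2 ^ (orderOf x).minFac := Nat.one_le_two_pow
    have hpowz : x ^ (2 ^ (orderOf x).minFac - 1) = 1 := by
      have h2 : x ^ (2 ^ (orderOf x).minFac - 1) * x = 1 * x := by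
        rw [← pow_succ, Nat.sub_add_cancel h1, hfix, one_mul]
      exact mul_right_cancel h2
    have hdvd : (orderOf x).minFac ∣ 2 ^ (orderOf x).minFac - 1 := by
      exact Nat.dvd_trans (dvd_of_eq hmp.symm) (orderOf_dvd_of_pow_eq_one hpowz)
    haveI : Fact (orderOf x).minFac.Prime := ⟨hpprime⟩
    have hz : ((2 ^ (orderOf x).minFac - 1 : ℕ) : ZMod (orderOf x).minFac) = 0 :=
      (ZMod.natCast_eq_zero_iff _ _).mpr hdvd
    rw [Nat.cast_sub h1] at hz
    push_cast at hz
    rw [ZMod.pow_card] at hz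
    have : (1 : ZMod (orderOf x).minFac) = 0 := by linear_combination hz
    exact one_ne_zero this
end

section
/- Let G be a group with only one non-trivial conjugacy class and suppose G is not of exponent 2. Then for every non-identity element x of G, there exists an element y conjugating x to x⁻¹ such that y² centralizes x (i.e., y has order 2 modulo the centralizer of x). -/
/-- In a group with only one non-trivial conjugacy class which is not of exponent 2, every
non-identity element `x` is conjugated to `x⁻¹` by some `y` with `y ^ 2` centralizing `x`. -/
theorem stmt_3 {G : Type*} [Group G]
    (hconj : ∀ x y : G, x ≠ 1 → y ≠ 1 → ∃ g : G, g⁻¹ * x * g = y)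
    (hexp : ¬ ∀ x : G, x ^ 2 = 1) :
    ∀ x : G, x ≠ 1 → ∃ y : G, y⁻¹ * x * y = x⁻¹ ∧ y ^ 2 * x = x * y ^ 2 := by
  intro x hx
  obtain ⟨y, hy⟩ := hconj x x⁻¹ hx (inv_ne_one.mpr hx)
  refine ⟨y, hy, ?_⟩
  have h2 : y⁻¹ * x⁻¹ * y = x := by
    have h := congrArg (fun z => z⁻¹) hy
    simp only [mul_inv_rev, inv_inv] at h
    rw [mul_assoc]; exact h
  -- from hy : x * y = y * x⁻¹ ; from h2 : y * x = x⁻¹ * y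
  have e1 : x * y = y * x⁻¹ := by
    have := congrArg (y * ·) hy
    simpa [mul_assoc] using this
  have e2 : y * x = x⁻¹ * y := by
    have := congrArg (y * ·) h2
    simpa [mul_assoc] using this.symm
  calc y ^ 2 * x = y * (y * x) := by rw [pow_two, mul_assoc]
  _ = y * (x⁻¹ * y) := by rw [e2]
  _ = (y * x⁻¹) * y := by rw [mul_assoc]
  _ = (x * y) * y := by rw [← e1]
  _ = x * y ^ 2 := by rw [pow_two, mul_assoc]
end

section
/- In a nilpotent group, every element of a divisible subgroup commutes with every element of finite order. That is, if G is nilpotent, D ≤ G is divisible, d ∈ D, and t ∈ G has finite order, then d·t = t·d. -/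
lemma comm_aux_calc {G : Type*} [Group G] (e t : G) (n : ℕ) (hn : 0 < n) (htn : t ^ n = 1)
    (hz : ∀ g : G, g * (e * t * e⁻¹ * t⁻¹) = (e * t * e⁻¹ * t⁻¹) * g) :
    e ^ n * t = t * e ^ n := by
  set z := e * t * e⁻¹ * t⁻¹ with hzdef
  have het : e * t = z * t * e := by rw [hzdef]; group
  have key : ∀ k : ℕ, e ^ k * t = z ^ k * t * e ^ k := by
    intro k
    induction k with
    | zero => simp
    | succ k ih =>
      have hc : e * z ^ k = z ^ k * e := ((show Commute e z from hz e).pow_right k).eq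
      calc e ^ (k + 1) * t = e * (e ^ k * t) := by rw [pow_succ']; group
        _ = e * (z ^ k * t * e ^ k) := by rw [ih]
        _ = e * z ^ k * (t * e ^ k) := by group
        _ = z ^ k * e * (t * e ^ k) := by rw [hc]
        _ = z ^ k * (e * t) * e ^ k := by group
        _ = z ^ k * (z * t * e) * e ^ k := by rw [het]
        _ = z ^ (k + 1) * t * e ^ (k + 1) := by rw [pow_succ, pow_succ']; group
  have key2 : ∀ k : ℕ, e * t ^ k = z ^ k * t ^ k * e := by
    intro k
    induction k with
    | zero => simp
    | succ k ih =>
      have hzt : t ^ k * z = z * t ^ k := hz (t ^ k)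
      calc e * t ^ (k + 1) = (e * t ^ k) * t := by rw [pow_succ]; group
        _ = z ^ k * t ^ k * e * t := by rw [ih]
        _ = z ^ k * t ^ k * (z * t * e) := by rw [← het]; group
        _ = z ^ k * (t ^ k * z) * t * e := by group
        _ = z ^ k * (z * t ^ k) * t * e := by rw [hzt]
        _ = z ^ (k + 1) * t ^ (k + 1) * e := by rw [pow_succ, pow_succ']; group
  have hzn : z ^ n = 1 := by
    have h := key2 n
    rw [htn] at h
    simpa using h
  rw [key n, hzn, one_mul]

lemma comm_aux : ∀ c : ℕ, ∀ (G : Type*) [Group G] [Group.IsNilpotent G],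
    Group.nilpotencyClass G ≤ c → ∀ D : Subgroup G,
    (∀ d ∈ D, ∀ n : ℕ, 0 < n → ∃ e ∈ D, e ^ n = d) →
    ∀ d ∈ D, ∀ t : G, (∃ n : ℕ, 0 < n ∧ t ^ n = 1) → d * t = t * d := by
  intro c
  induction c with
  | zero =>
    intro G _ _ hc D _ d _ t _
    have : Subsingleton G := nilpotencyClass_zero_iff_subsingleton.mp (Nat.le_zero.mp hc)
    exact Subsingleton.elim _ _
  | succ c ih =>
    intro G _ _ hc D hdiv d hd t ht
    obtain ⟨n, hn, htn⟩ := ht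
    set Z := Subgroup.center G
    set π := QuotientGroup.mk' Z
    have hQclass : Group.nilpotencyClass (G ⧸ Z) ≤ c := by
      show Group.nilpotencyClass (G ⧸ Subgroup.center G) ≤ c
      have h := nilpotencyClass_quotient_center (G := G)
      omega
    set D' := D.map π
    have hdiv' : ∀ d' ∈ D', ∀ m : ℕ, 0 < m → ∃ e' ∈ D', e' ^ m = d' := by
      intro d' hd' m hm
      obtain ⟨x, hx, rfl⟩ := hd'
      obtain ⟨e, he, hem⟩ := hdiv x hx m hm
      exact ⟨π e, ⟨e, he, rfl⟩, by rw [← map_pow, hem]⟩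
    have hcent : ∀ e ∈ D, ∀ g : G, g * (e * t * e⁻¹ * t⁻¹) = (e * t * e⁻¹ * t⁻¹) * g := by
      intro e he g
      have hcomm : π e * π t = π t * π e :=
        ih (G ⧸ Z) hQclass D' hdiv' (π e) ⟨e, he, rfl⟩ (π t)
          ⟨n, hn, by rw [← map_pow, htn, map_one]⟩
      have hone : π (e * t * e⁻¹ * t⁻¹) = 1 := by
        simp only [map_mul, map_inv]
        rw [hcomm]; group
      have hmem : e * t * e⁻¹ * t⁻¹ ∈ Z := by
        rwa [← QuotientGroup.ker_mk' Z, MonoidHom.mem_ker]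
      exact Subgroup.mem_center_iff.mp hmem g
    obtain ⟨e, he, hen⟩ := hdiv d hd n hn
    rw [← hen]
    exact comm_aux_calc e t n hn htn (hcent e he)

/-- In a nilpotent group, any element of a divisible subgroup commutes with every element of
finite order. -/
theorem stmt_4 {G : Type*} [Group G] [Group.IsNilpotent G] (D : Subgroup G)
    (hdiv : ∀ d ∈ D, ∀ n : ℕ, 0 < n → ∃ e ∈ D, e ^ n = d)
    (d : G) (hd : d ∈ D) (t : G) (ht : ∃ n : ℕ, 0 < n ∧ t ^ n = 1) :
    d * t = t * d :=
  comm_aux (Group.nilpotencyClass G) G le_rfl D hdiv d hd t ht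
end

section
/- Let G be a nilpotent group of nilpotency class c, and suppose the abelianization G/G' has exponent n. Then the exponent of G divides n^c. -/
/-! Write `γ i` for the lower central series, with `γ 0 = G`. For `a ∈ γ i`, the map
`b ↦ ⁅a, b⁆` is a homomorphism from `G` into the centre of `G ⧸ γ (i + 2)`, so it factors through
`G ⧸ G'` and kills `n`-th powers. Hence the generators `⁅a, b⁆` of `γ (i + 1)` have `n`-th power
in `γ (i + 2)`, and since `γ (i + 1)` is central modulo `γ (i + 2)`, so do all its elements.
Inductively `x ^ n ^ i ∈ γ i`, and `γ c = ⊥`. -/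

open Subgroup
open scoped commutatorElement IsMulCommutative

section

variable {G H : Type*} [Group G] [Group H]

def commutatorElementHom (φ : G →* H) (a : H) (ha : ∀ g, ⁅a, φ g⁆ ∈ center H) :
    G →* center H where
  toFun g := ⟨⁅a, φ g⁆, ha g⟩
  map_one' := by ext; simp
  map_mul' g h := Subtype.ext <| by
    change ⁅a, φ (g * h)⁆ = ⁅a, φ g⁆ * ⁅a, φ h⁆
    rw [map_mul, commutatorElement_mul_right_eq_mul_conj, mul_assoc _ (φ g),
      mem_center_iff.mp (ha h) (φ g), mul_assoc, mul_inv_cancel_right]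

theorem mk_mem_center_of_mem_lowerCentralSeries {i : ℕ} {z : G}
    (hz : z ∈ (⊤ : Subgroup G).lowerCentralSeries i) :
    (z : G ⧸ (⊤ : Subgroup G).lowerCentralSeries (i + 1)) ∈ center _ := by
  have : z ∈ Subgroup.upperCentralSeriesStep ((⊤ : Subgroup G).lowerCentralSeries (i + 1)) :=
    fun g ↦ commutator_mem_commutator hz (mem_top g)
  rwa [Subgroup.upperCentralSeriesStep_eq_comap_center] at this

theorem commutatorElement_pow_eq_one {n : ℕ} (hn : ∀ x : Abelianization G, x ^ n = 1)
    (φ : G →* H) (a : H) (ha : ∀ g, ⁅a, φ g⁆ ∈ center H) (b : G) : ⁅a, φ b⁆ ^ n = 1 := by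
  have : commutatorElementHom φ a ha b ^ n = 1 := by
    rw [← Abelianization.lift_apply_of, ← map_pow, hn, map_one]
  exact congrArg Subtype.val this

theorem pow_mem_lowerCentralSeries_succ {n : ℕ} (hn : ∀ x : Abelianization G, x ^ n = 1) :
    ∀ i, ∀ y ∈ (⊤ : Subgroup G).lowerCentralSeries i,
      y ^ n ∈ (⊤ : Subgroup G).lowerCentralSeries (i + 1)
  | 0, y, _ => (QuotientGroup.eq_one_iff _).mp <| by
    change Abelianization.of (y ^ n) = 1
    rw [map_pow, hn]
  | i + 1, y, hy => by
    rw [← QuotientGroup.eq_one_iff, QuotientGroup.mk_pow]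
    induction hy using closure_induction with
    | mem x hx =>
      obtain ⟨a, ha, b, -, rfl⟩ := hx
      rw [← QuotientGroup.mk'_apply, map_commutatorElement]
      refine commutatorElement_pow_eq_one hn _ _ (fun g ↦ ?_) b
      exact mk_mem_center_of_mem_lowerCentralSeries (commutator_mem_commutator ha (mem_top g))
    | one => rw [QuotientGroup.mk_one, one_pow]
    | mul z w hz _ ihz ihw =>
      have hzc := mk_mem_center_of_mem_lowerCentralSeries (i := i + 1) hz
      rw [QuotientGroup.mk_mul, Commute.mul_pow (mem_center_iff.mp hzc _).symm, ihz, ihw, one_mul]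
    | inv z _ ihz => rw [QuotientGroup.mk_inv, inv_pow, ihz, inv_one]

theorem pow_pow_mem_lowerCentralSeries {n : ℕ} (hn : ∀ x : Abelianization G, x ^ n = 1) :
    ∀ (i : ℕ) (x : G), x ^ n ^ i ∈ (⊤ : Subgroup G).lowerCentralSeries i
  | 0, x => mem_top _
  | i + 1, x => by
    rw [pow_succ, pow_mul]
    exact pow_mem_lowerCentralSeries_succ hn i _ (pow_pow_mem_lowerCentralSeries hn i x)

end

/-- If `G` is nilpotent of class `c` and `G/G'` has exponent `n`, then the exponent of `G`
divides `n ^ c`. -/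
theorem stmt_5 {G : Type*} [Group G] [Group.IsNilpotent G] (c n : ℕ)
    (hc : Group.nilpotencyClass G = c)
    (hn : ∀ x : Abelianization G, x ^ n = 1) :
    ∀ x : G, x ^ (n ^ c) = 1 := by
  subst hc
  intro x
  have := pow_pow_mem_lowerCentralSeries hn (Group.nilpotencyClass G) x
  rwa [Subgroup.lowerCentralSeries_nilpotencyClass, mem_bot] at this
end

section
/- Let X and Y be Hausdorff topological spaces and f : X → Y an open surjective map. Then the Cantor-Bendixson rank of X is at least the Cantor-Bendixson rank of Y. -/
open Filter

/-!
An open map pulls accumulation points back to accumulation points, so by transfinite induction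
the preimage of the `o`-th Cantor–Bendixson derivative of `Y` lies in that of `X`; surjectivity
then transports nonemptiness from `Y` to `X`.
-/

noncomputable def cbDeriv (X : Type*) [TopologicalSpace X] (o : Ordinal) : Set X :=
  Ordinal.limitRecOn o Set.univ
    (fun _ s => {x | x ∈ s ∧ AccPt x (𝓟 s)})
    (fun o _ ih => ⋂ (o' : Ordinal) (h : o' < o), ih o' h)

section CantorBendixson

variable {X Y : Type*} [TopologicalSpace X] [TopologicalSpace Y]

theorem cbDeriv_zero : cbDeriv X 0 = Set.univ :=
  Ordinal.limitRecOn_zero _ _ _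

theorem cbDeriv_add_one (o : Ordinal) :
    cbDeriv X (o + 1) = {x | x ∈ cbDeriv X o ∧ AccPt x (𝓟 (cbDeriv X o))} :=
  Ordinal.limitRecOn_add_one _ _ _ _

theorem cbDeriv_limit {o : Ordinal} (h : Order.IsSuccLimit o) :
    cbDeriv X o = ⋂ (o' : Ordinal) (_ : o' < o), cbDeriv X o' :=
  Ordinal.limitRecOn_limit _ _ _ _ h

theorem IsOpenMap.accPt_preimage {f : X → Y} (hf : IsOpenMap f) {x : X} {s : Set Y}
    (h : AccPt (f x) (𝓟 s)) : AccPt x (𝓟 (f ⁻¹' s)) := by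
  simpa only [comap_principal] using hf.accPt_comap h

theorem IsOpenMap.preimage_cbDeriv_subset {f : X → Y} (hf : IsOpenMap f) (o : Ordinal) :
    f ⁻¹' cbDeriv Y o ⊆ cbDeriv X o := by
  induction o using Ordinal.limitRecOn with
  | zero => simp only [cbDeriv_zero, Set.preimage_univ, subset_refl]
  | add_one o ih =>
    rw [cbDeriv_add_one, cbDeriv_add_one]
    rintro x ⟨hx, hacc⟩
    exact ⟨ih hx, (hf.accPt_preimage hacc).mono (principal_mono.mpr ih)⟩
  | limit o ho ih =>
    rw [cbDeriv_limit ho, cbDeriv_limit ho, Set.preimage_iInter₂]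
    exact Set.iInter₂_mono ih

end CantorBendixson

theorem stmt_6_general {X Y : Type*} [TopologicalSpace X] [TopologicalSpace Y]
    (f : X → Y) (hopen : IsOpenMap f)
    (hsurj : Function.Surjective f) :
    ∀ o : Ordinal, (cbDeriv Y o).Nonempty → (cbDeriv X o).Nonempty := by
  rintro o ⟨y, hy⟩
  obtain ⟨x, rfl⟩ := hsurj y
  exact ⟨x, hopen.preimage_cbDeriv_subset o hy⟩

/-- If `f : X → Y` is open and onto, the Cantor–Bendixson rank of `X` is at least that of `Y`:
whenever the `o`-th derivative of `Y` is nonempty, so is the `o`-th derivative of `X`. -/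
theorem stmt_6 {X Y : Type*} [TopologicalSpace X] [TopologicalSpace Y]
    [T2Space X] [T2Space Y] (f : X → Y) (hopen : IsOpenMap f)
    (hsurj : Function.Surjective f) :
    ∀ o : Ordinal, (cbDeriv Y o).Nonempty → (cbDeriv X o).Nonempty :=
  stmt_6_general f hopen hsurj
end

section
/- Let G be a group acting on itself by conjugation, and suppose every conjugacy class of G is finite of size at most n for some fixed natural number n. Then the commutator subgroup G' of G is finite. -/
/-!
Let `a` have a conjugacy class `[a]` of maximal size `m`, realised as `{c a c⁻¹ | c ∈ X}` for
a finite set `X`, and let `D` be the centralizer of `X`, a subgroup of finite index. For `d ∈ D`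
the class of `d a` contains the `m` distinct elements `d c a c⁻¹`, so by maximality it is exactly
`d • [a]`. Hence every commutator `⁅d, g⁆` with `d ∈ D` lies in the finite set `[a] * [a]⁻¹`, and
writing an arbitrary element as `t d` with `t` in a finite transversal of `D` shows that `G` has
only finitely many commutators. Schur's theorem (Mathlib's instance `Finite (commutator G)` under
`Finite (commutatorSet G)`) then makes the commutator subgroup finite.
-/

section

open Subgroup
open scoped Pointwise commutatorElement

variable {G : Type*} [Group G]

lemma conjugatesOf_eq_setOf_inv_mul_mul (g : G) :
    conjugatesOf g = {h : G | ∃ x : G, x⁻¹ * g * x = h} := by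
  ext h
  simp only [conjugatesOf, isConj_iff, Set.mem_ofPred_eq]
  exact ⟨fun ⟨c, hc⟩ => ⟨c⁻¹, by simpa using hc⟩, fun ⟨x, hx⟩ => ⟨x⁻¹, by simpa using hx⟩⟩

lemma commutatorElement_mem_smul_conjugatesOf_inv (a b : G) :
    ⁅a, b⁆ ∈ a • conjugatesOf a⁻¹ :=
  ⟨b * a⁻¹ * b⁻¹, isConj_iff.mpr ⟨b, rfl⟩, by simp [commutatorElement_def, mul_assoc]⟩

namespace Subgroup

lemma index_centralizer_singleton (g : G) :
    (centralizer {g}).index = (conjugatesOf g).ncard := by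
  rw [centralizer_eq_comap_stabilizer]
  refine (index_comap_of_surjective _ ConjAct.toConjAct.surjective).trans ?_
  rw [MulAction.index_stabilizer]
  congr 1
  ext h
  exact ConjAct.mem_orbit_conjAct.trans isConj_comm

lemma finiteIndex_centralizer_singleton {g : G} (hg : (conjugatesOf g).Finite) :
    (centralizer {g}).FiniteIndex :=
  ⟨by
    rw [index_centralizer_singleton]
    exact ((Set.ncard_pos hg).mpr ⟨g, mem_conjugatesOf_self⟩).ne'⟩

lemma finiteIndex_centralizer_of_finite (hG : ∀ g : G, (conjugatesOf g).Finite) {s : Set G}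
    (hs : s.Finite) : (centralizer s).FiniteIndex := by
  rw [centralizer_eq_iInf, ← hs.coe_toFinset]
  exact finiteIndex_iInf' _ fun g _ => finiteIndex_centralizer_singleton (hG g)

end Subgroup

section MaximalClass

variable {a : G} {X : Set G}

lemma exists_finite_conjugators (ha : (conjugatesOf a).Finite) :
    ∃ X : Set G, X.Finite ∧ conjugatesOf a ⊆ (fun c => c * a * c⁻¹) '' X := by
  have : Finite (conjugatesOf a) := ha.to_subtype
  choose f hf using fun b : conjugatesOf a => isConj_iff.mp b.2
  exact ⟨Set.range f, Set.finite_range f, fun b hb => ⟨f ⟨b, hb⟩, ⟨_, rfl⟩, hf ⟨b, hb⟩⟩⟩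

lemma smul_conjugatesOf_subset {d : G} (hd : d ∈ centralizer X)
    (hX : conjugatesOf a ⊆ (fun c => c * a * c⁻¹) '' X) :
    d • conjugatesOf a ⊆ conjugatesOf (d * a) := by
  rintro _ ⟨b, hb, rfl⟩
  obtain ⟨c, hc, rfl⟩ := hX hb
  refine isConj_iff.mpr ⟨c, ?_⟩
  have hcd : c * d = d * c := hd c hc
  simp only [smul_eq_mul, ← mul_assoc, hcd]

lemma conjugatesOf_mul_eq_smul {d : G} (hd : d ∈ centralizer X)
    (hX : conjugatesOf a ⊆ (fun c => c * a * c⁻¹) '' X) (hfin : (conjugatesOf (d * a)).Finite)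
    (hmax : (conjugatesOf (d * a)).ncard ≤ (conjugatesOf a).ncard) :
    conjugatesOf (d * a) = d • conjugatesOf a :=
  (Set.eq_of_subset_of_ncard_le (smul_conjugatesOf_subset hd hX)
    (by rwa [Set.ncard_smul_set]) hfin).symm

lemma commutatorElement_mem_conjugatesOf_mul_inv_conjugatesOf
    (hmax : ∀ g : G, (conjugatesOf g).Finite ∧ (conjugatesOf g).ncard ≤ (conjugatesOf a).ncard)
    (hX : conjugatesOf a ⊆ (fun c => c * a * c⁻¹) '' X) {d : G} (hd : d ∈ centralizer X)
    (g : G) : ⁅d, g⁆ ∈ conjugatesOf a * (conjugatesOf a)⁻¹ := by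
  have hd' : d⁻¹ ∈ centralizer X := inv_mem hd
  have hconj : g * (d⁻¹ * a) * g⁻¹ ∈ d⁻¹ • conjugatesOf a := by
    rw [← conjugatesOf_mul_eq_smul hd' hX (hmax _).1 (hmax _).2]
    exact isConj_iff.mpr ⟨g, rfl⟩
  obtain ⟨b, hb, hbeq⟩ := hconj
  refine ⟨b, hb, (g * a * g⁻¹)⁻¹, Set.inv_mem_inv.mpr (isConj_iff.mpr ⟨g, rfl⟩), ?_⟩
  simp only [smul_eq_mul] at hbeq
  rw [eq_inv_mul_of_mul_eq hbeq, commutatorElement_def]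
  group

end MaximalClass

theorem commutatorSet_finite_of_ncard_conjugatesOf_le {n : ℕ}
    (hG : ∀ g : G, (conjugatesOf g).Finite ∧ (conjugatesOf g).ncard ≤ n) :
    (commutatorSet G).Finite := by
  obtain ⟨a, ha_max⟩ : ∃ a : G, ∀ g : G, (conjugatesOf g).ncard ≤ (conjugatesOf a).ncard := by
    have hbdd : BddAbove (Set.range fun g : G => (conjugatesOf g).ncard) :=
      ⟨n, by rintro _ ⟨g, rfl⟩; exact (hG g).2⟩
    obtain ⟨a, ha⟩ := Nat.sSup_mem (Set.range_nonempty _) hbdd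
    exact ⟨a, fun g => (le_csSup hbdd ⟨g, rfl⟩).trans_eq ha.symm⟩
  have hmax g := And.intro (hG g).1 (ha_max g)
  obtain ⟨X, hXfin, hX⟩ := exists_finite_conjugators (hG a).1
  have : (centralizer X).FiniteIndex :=
    finiteIndex_centralizer_of_finite (fun g => (hG g).1) hXfin
  have : Finite (G ⧸ centralizer X) := finite_quotient_of_finiteIndex
  have hS : (conjugatesOf a * (conjugatesOf a)⁻¹).Finite := (hG a).1.mul (hG a).1.inv
  refine ((Set.finite_range (Quotient.out : G ⧸ centralizer X → G)).biUnion fun t _ =>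
    (hS.image fun s => t * s * t⁻¹).mul ((hG t⁻¹).1.image (t * ·))).subset ?_
  rintro _ ⟨x, g, rfl⟩
  set t := (x : G ⧸ centralizer X).out
  have hd : t⁻¹ * x ∈ centralizer X := QuotientGroup.eq.mp (QuotientGroup.out_eq' _)
  rw [← mul_inv_cancel_left t x, commutatorElement_mul_left_eq_conj_mul]
  exact Set.mem_biUnion ⟨_, rfl⟩ (Set.mul_mem_mul
    ⟨_, commutatorElement_mem_conjugatesOf_mul_inv_conjugatesOf hmax hX hd g, rfl⟩
    (commutatorElement_mem_smul_conjugatesOf_inv t g))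

end

/-- B. H. Neumann's theorem: if every conjugacy class of `G` has at most `n` elements, then
the commutator subgroup of `G` is finite. -/
theorem stmt_9 {G : Type*} [Group G] (n : ℕ)
    (h : ∀ g : G, ({h : G | ∃ x : G, x⁻¹ * g * x = h}).Finite ∧
      ({h : G | ∃ x : G, x⁻¹ * g * x = h}).ncard ≤ n) :
    ((commutator G : Subgroup G) : Set G).Finite := by
  simp only [← conjugatesOf_eq_setOf_inv_mul_mul] at h
  have := (commutatorSet_finite_of_ncard_conjugatesOf_le h).to_subtype
  exact Set.finite_coe_iff.mp (inferInstanceAs (Finite (commutator G)))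
end

section
/- Let G be a group that is the central product decomposition candidate: suppose G is nilpotent, Z(G) its center, and Z(G) = D₀ ⊕ F₀ where D₀ is divisible and F₀ has exponent m. Let A ≤ G be a normal subgroup containing Z(G) such that A/Z(G) is divisible. Then the set D = A^{2m} · D₀ = {a^{2m} d : a ∈ A, d ∈ D₀} is a divisible normal subgroup of G. -/
/-!
Write `γ` for the lower central series and suppose every element of `H` has an `n`-th root
modulo `Z(H)`. On a generator `⁅p, w⁆` of `γ (k + 1)` write `w = w₁ ^ n * z` with `z` central;
then `⁅p, w⁆ = ⁅p, w₁ ^ n⁆ ≡ ⁅p, w₁⁆ ^ n` modulo `γ (k + 2)`, since `⁅p, w₁⁆` is central there.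
So `γ (k + 1)` consists of `n`-th powers modulo `γ (k + 2)`, and as `(q * y) ^ n ≡ q ^ n * y ^ n`
modulo `γ (k + 1)` for `y ∈ γ k`, a product `q ^ n * x` with `x ∈ γ (k + 1)` equals `q' ^ n * x'`
with `x'` one level deeper. When `H` is nilpotent, descending to the bottom shows that
`a ^ n * b ^ n` is an `n`-th power.

Applied to `A`, whose centre contains `Z(G)`, this makes `A ^ (2 * m) * D₀` a subgroup. It is
divisible: if `b ^ k = a * z` with `z` central, then `(b ^ (2 * m) * e) ^ k = a ^ (2 * m) * d`
once `e ^ k = (z ^ (2 * m))⁻¹ * d`, which exists because `z ^ (2 * m) ∈ D₀`: the exponent kills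
the `F₀`-component of `z`.
-/

open Subgroup
open scoped commutatorElement

def HasNthRootsModCenter (H : Type*) [Group H] (n : ℕ) : Prop :=
  ∀ v : H, ∃ w : H, ∃ z ∈ center H, w ^ n = v * z

section Commutator

variable {H : Type*} [Group H]

theorem commutatorElement_mul_right_of_mem_center (a b : H) {z : H} (hz : z ∈ center H) :
    ⁅a, b * z⁆ = ⁅a, b⁆ := by
  have hcomm : Commute a z := mem_center_iff.mp hz a
  rw [commutatorElement_mul_right_eq_mul_conj, hcomm.commutator_eq, mul_one, mul_inv_cancel_right]

theorem commutatorElement_pow_right_of_commute {a b : H} (h : Commute ⁅a, b⁆ b) (n : ℕ) :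
    ⁅a, b ^ n⁆ = ⁅a, b⁆ ^ n := by
  have hconj : a * b * a⁻¹ = ⁅a, b⁆ * b := by group
  rw [commutatorElement_def, ← conj_pow, hconj, h.mul_pow, mul_inv_cancel_right]

end Commutator

section LowerCentralSeries

variable {H : Type*} [Group H]

local notation "γ" => Subgroup.lowerCentralSeries (⊤ : Subgroup H)

theorem mk_mem_center_of_mem_lowerCentralSeries_s13 {k : ℕ} {x : H} (hx : x ∈ γ k) :
    (x : H ⧸ γ (k + 1)) ∈ center (H ⧸ γ (k + 1)) := by
  refine mem_center_iff.mpr fun g => ?_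
  induction g using QuotientGroup.induction_on with
  | H g =>
    have hxg : ((⁅x, g⁆ : H) : H ⧸ γ (k + 1)) = 1 :=
      (QuotientGroup.eq_one_iff _).mpr
        (Subgroup.lowerCentralSeries_isDescendingCentralSeries.2 x k hx g)
    rw [← QuotientGroup.mk'_apply, map_commutatorElement,
      commutatorElement_eq_one_iff_mul_comm] at hxg
    exact hxg.symm

theorem mk_mul_pow_of_mem_lowerCentralSeries {k : ℕ} {y : H} (hy : y ∈ γ k) (q : H) (n : ℕ) :
    (((q * y) ^ n : H) : H ⧸ γ (k + 1)) = ((q ^ n * y ^ n : H) : H ⧸ γ (k + 1)) := by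
  have hcomm : Commute (q : H ⧸ γ (k + 1)) y :=
    mem_center_iff.mp (mk_mem_center_of_mem_lowerCentralSeries_s13 hy) q
  exact hcomm.mul_pow n

variable {n : ℕ}

theorem exists_mk_eq_pow_of_mem_lowerCentralSeries_succ (hroot : HasNthRootsModCenter H n)
    {k : ℕ} {x : H} (hx : x ∈ γ (k + 1)) :
    ∃ y ∈ γ (k + 1), (x : H ⧸ γ (k + 2)) = (y : H ⧸ γ (k + 2)) ^ n := by
  set π := QuotientGroup.mk' (γ (k + 2))
  have hcentral : ∀ {y}, y ∈ γ (k + 1) → ∀ g, Commute (π g) (π y) := fun hy g =>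
    mem_center_iff.mp (mk_mem_center_of_mem_lowerCentralSeries_s13 hy) (π g)
  suffices ∃ y ∈ γ (k + 1), π x = π y ^ n from this
  induction hx using closure_induction with
  | mem g hg =>
    obtain ⟨p, hp, w, -, rfl⟩ := hg
    obtain ⟨w₁, z, hz, hw₁⟩ := hroot w
    have hw : w = w₁ ^ n * z⁻¹ := by rw [hw₁, mul_inv_cancel_right]
    have hpw₁ : ⁅p, w₁⁆ ∈ γ (k + 1) := commutator_mem_commutator hp (mem_top w₁)
    refine ⟨⁅p, w₁⁆, hpw₁, ?_⟩
    have hcomm : Commute ⁅π p, π w₁⁆ (π w₁) := by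
      rw [← map_commutatorElement]
      exact (hcentral hpw₁ w₁).symm
    rw [hw, commutatorElement_mul_right_of_mem_center _ _ (inv_mem hz), map_commutatorElement,
      map_pow, commutatorElement_pow_right_of_commute hcomm, map_commutatorElement]
  | one => exact ⟨1, one_mem _, by rw [map_one, one_pow]⟩
  | mul x₁ x₂ _ _ ih₁ ih₂ =>
    obtain ⟨y₁, hy₁, h₁⟩ := ih₁
    obtain ⟨y₂, hy₂, h₂⟩ := ih₂
    refine ⟨y₁ * y₂, mul_mem hy₁ hy₂, ?_⟩
    rw [map_mul, map_mul, h₁, h₂, (hcentral hy₂ y₁).mul_pow]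
  | inv x _ ih =>
    obtain ⟨y, hy, h⟩ := ih
    exact ⟨y⁻¹, inv_mem hy, by rw [map_inv, map_inv, h, inv_pow]⟩

theorem exists_pow_eq_pow_mul_of_lowerCentralSeries_eq_bot (hroot : HasNthRootsModCenter H n)
    (t : ℕ) :
    ∀ k, γ (k + 1 + t) = ⊥ → ∀ q, ∀ x ∈ γ (k + 1), ∃ h : H, h ^ n = q ^ n * x := by
  induction t with
  | zero =>
    intro k hbot q x hx
    rw [add_zero] at hbot
    rw [hbot, mem_bot] at hx
    exact ⟨q, by rw [hx, mul_one]⟩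
  | succ t ih =>
    intro k hbot q x hx
    obtain ⟨y, hy, hxy⟩ := exists_mk_eq_pow_of_mem_lowerCentralSeries_succ hroot hx
    have hmk : (((q * y) ^ n : H) : H ⧸ γ (k + 2)) = ((q ^ n * x : H) : H ⧸ γ (k + 2)) := by
      rw [mk_mul_pow_of_mem_lowerCentralSeries hy, QuotientGroup.mk_mul, QuotientGroup.mk_mul, hxy,
        QuotientGroup.mk_pow, QuotientGroup.mk_pow]
    obtain ⟨h, hh⟩ :=
      ih (k + 1) (by rwa [add_right_comm, add_assoc]) (q * y) _ (QuotientGroup.eq.mp hmk)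
    exact ⟨h, by rw [hh, mul_inv_cancel_left]⟩

theorem exists_pow_eq_pow_mul_pow [Group.IsNilpotent H] (hroot : HasNthRootsModCenter H n)
    (a b : H) :
    ∃ h : H, h ^ n = a ^ n * b ^ n := by
  obtain ⟨c, hc⟩ := Subgroup.nilpotent_iff_lowerCentralSeries.mp ‹_›
  have hbot : γ (0 + 1 + c) = ⊥ :=
    le_bot_iff.mp (hc ▸ Subgroup.lowerCentralSeries_antitone _ (by omega))
  have hmk := mk_mul_pow_of_mem_lowerCentralSeries (k := 0) (mem_top b) a n
  obtain ⟨h, hh⟩ := exists_pow_eq_pow_mul_of_lowerCentralSeries_eq_bot hroot c 0 hbot (a * b) _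
    (QuotientGroup.eq.mp hmk)
  exact ⟨h, by rw [hh, mul_inv_cancel_left]⟩

end LowerCentralSeries

section PowMul

variable {G : Type*} [Group G]

theorem Subgroup.exists_mem_pow_eq_pow_mul_pow [Group.IsNilpotent G] {A : Subgroup G}
    (hZA : center G ≤ A) {n : ℕ} (hroot : ∀ a ∈ A, ∃ b ∈ A, ∃ z ∈ center G, b ^ n = a * z)
    {a b : G} (ha : a ∈ A) (hb : b ∈ A) : ∃ c ∈ A, c ^ n = a ^ n * b ^ n := by
  have hroot' : HasNthRootsModCenter A n := fun v => by
    obtain ⟨w, hw, z, hz, hwz⟩ := hroot v v.2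
    exact ⟨⟨w, hw⟩, ⟨z, hZA hz⟩,
      mem_center_iff.mpr fun g => Subtype.ext (mem_center_iff.mp hz g), Subtype.ext hwz⟩
  obtain ⟨c, hc⟩ := exists_pow_eq_pow_mul_pow hroot' ⟨a, ha⟩ ⟨b, hb⟩
  exact ⟨c, c.2, congrArg Subtype.val hc⟩

theorem pow_mem_of_forall_mem_center_eq_mul {D₀ F₀ : Subgroup G} (hD₀ : D₀ ≤ center G)
    (hsum : ∀ z ∈ center G, ∃ d ∈ D₀, ∃ f ∈ F₀, z = d * f) {n : ℕ} (hF₀ : ∀ f ∈ F₀, f ^ n = 1)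
    {z : G} (hz : z ∈ center G) : z ^ n ∈ D₀ := by
  obtain ⟨d, hd, f, hf, rfl⟩ := hsum z hz
  have hdf : Commute d f := (mem_center_iff.mp (hD₀ hd) f).symm
  rw [hdf.mul_pow, hF₀ f hf, mul_one]
  exact pow_mem hd n

def powMulSubgroup (A D₀ : Subgroup G) (n : ℕ) (hD₀ : D₀ ≤ center G)
    (hmul : ∀ a ∈ A, ∀ b ∈ A, ∃ c ∈ A, c ^ n = a ^ n * b ^ n) : Subgroup G where
  carrier := {x | ∃ a ∈ A, ∃ d ∈ D₀, x = a ^ n * d}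
  one_mem' := ⟨1, one_mem A, 1, one_mem D₀, by rw [one_pow, one_mul]⟩
  mul_mem' := by
    rintro _ _ ⟨a, ha, d, hd, rfl⟩ ⟨b, hb, e, he, rfl⟩
    obtain ⟨c, hc, hcab⟩ := hmul a ha b hb
    have hdb : b ^ n * d = d * b ^ n := mem_center_iff.mp (hD₀ hd) _
    refine ⟨c, hc, d * e, mul_mem hd he, ?_⟩
    rw [hcab, mul_assoc, ← mul_assoc d, ← hdb]
    group
  inv_mem' := by
    rintro _ ⟨a, ha, d, hd, rfl⟩
    have hda : (a ^ n)⁻¹ * d⁻¹ = d⁻¹ * (a ^ n)⁻¹ := mem_center_iff.mp (inv_mem (hD₀ hd)) _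
    exact ⟨a⁻¹, inv_mem ha, d⁻¹, inv_mem hd, by rw [mul_inv_rev, ← hda, inv_pow]⟩

variable {A D₀ : Subgroup G} {n : ℕ} {hD₀ : D₀ ≤ center G}
  {hmul : ∀ a ∈ A, ∀ b ∈ A, ∃ c ∈ A, c ^ n = a ^ n * b ^ n}

theorem powMulSubgroup_normal (hA : A.Normal) : (powMulSubgroup A D₀ n hD₀ hmul).Normal := by
  refine ⟨?_⟩
  rintro _ ⟨a, ha, d, hd, rfl⟩ g
  have hdg : g⁻¹ * d = d * g⁻¹ := mem_center_iff.mp (hD₀ hd) _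
  refine ⟨g * a * g⁻¹, hA.conj_mem a ha g, d, hd, ?_⟩
  rw [conj_pow, mul_assoc, mul_assoc, ← hdg]
  group

theorem powMulSubgroup_divisible (hZ : ∀ z ∈ center G, z ^ n ∈ D₀)
    (hD₀div : ∀ d ∈ D₀, ∀ k : ℕ, 0 < k → ∃ e ∈ D₀, e ^ k = d)
    (hAdiv : ∀ a ∈ A, ∀ k : ℕ, 0 < k → ∃ b ∈ A, ∃ z ∈ center G, b ^ k = a * z) :
    ∀ x ∈ powMulSubgroup A D₀ n hD₀ hmul, ∀ k : ℕ, 0 < k →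
      ∃ y ∈ powMulSubgroup A D₀ n hD₀ hmul, y ^ k = x := by
  rintro _ ⟨a, ha, d, hd, rfl⟩ k hk
  obtain ⟨b, hb, z, hz, hbz⟩ := hAdiv a ha k hk
  obtain ⟨e, he, hek⟩ := hD₀div _ (mul_mem (inv_mem (hZ z hz)) hd) k hk
  have hbe : Commute (b ^ n) e := mem_center_iff.mp (hD₀ he) _
  have haz : Commute a z := mem_center_iff.mp hz a
  refine ⟨b ^ n * e, ⟨b, hb, e, he, rfl⟩, ?_⟩
  rw [hbe.mul_pow, ← pow_mul, mul_comm n k, pow_mul, hbz, haz.mul_pow, hek, mul_assoc,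
    mul_inv_cancel_left]

end PowMul

theorem stmt_13_general {G : Type*} [Group G] [Group.IsNilpotent G]
    (D₀ F₀ : Subgroup G) (m : ℕ) (hm : 0 < m)
    (hD₀c : D₀ ≤ Subgroup.center G)
    (hsum : ∀ z ∈ Subgroup.center G, ∃ d ∈ D₀, ∃ f ∈ F₀, z = d * f)
    (hD₀div : ∀ d ∈ D₀, ∀ k : ℕ, 0 < k → ∃ e ∈ D₀, e ^ k = d)
    (hF₀exp : ∀ f ∈ F₀, f ^ m = 1)
    (A : Subgroup G) (hA : A.Normal) (hZA : Subgroup.center G ≤ A)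
    (hAdiv : ∀ a ∈ A, ∀ k : ℕ, 0 < k →
      ∃ b ∈ A, ∃ z ∈ Subgroup.center G, b ^ k = a * z) :
    ∃ D : Subgroup G,
      (D : Set G) = {x : G | ∃ a ∈ A, ∃ d ∈ D₀, x = a ^ (2 * m) * d} ∧
      D.Normal ∧
      (∀ x ∈ D, ∀ k : ℕ, 0 < k → ∃ y ∈ D, y ^ k = x) := by
  have hmul : ∀ a ∈ A, ∀ b ∈ A, ∃ c ∈ A, c ^ (2 * m) = a ^ (2 * m) * b ^ (2 * m) :=
    fun _ ha _ hb => A.exists_mem_pow_eq_pow_mul_pow hZA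
      (fun a ha => hAdiv a ha (2 * m) (by positivity)) ha hb
  have hZ : ∀ z ∈ center G, z ^ (2 * m) ∈ D₀ := fun z hz =>
    pow_mem_of_forall_mem_center_eq_mul hD₀c hsum
      (fun f hf => by rw [mul_comm, pow_mul, hF₀exp f hf, one_pow]) hz
  exact ⟨powMulSubgroup A D₀ (2 * m) hD₀c hmul, rfl, powMulSubgroup_normal hA,
    powMulSubgroup_divisible hZ hD₀div hAdiv⟩

/-- If `G` is nilpotent with centre `Z(G) = D₀ ⊕ F₀`, `D₀` divisible and `F₀` of exponent `m`,
and `A` is a normal subgroup containing the centre with `A/Z(G)` divisible, then the set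
`D = A^{2m} · D₀` is a divisible normal subgroup of `G`. -/
theorem stmt_13 {G : Type*} [Group G] [Group.IsNilpotent G]
    (D₀ F₀ : Subgroup G) (m : ℕ) (hm : 0 < m)
    (hD₀c : D₀ ≤ Subgroup.center G) (hF₀c : F₀ ≤ Subgroup.center G)
    (hdisj : D₀ ⊓ F₀ = ⊥)
    (hsum : ∀ z ∈ Subgroup.center G, ∃ d ∈ D₀, ∃ f ∈ F₀, z = d * f)
    (hD₀div : ∀ d ∈ D₀, ∀ k : ℕ, 0 < k → ∃ e ∈ D₀, e ^ k = d)
    (hF₀exp : ∀ f ∈ F₀, f ^ m = 1)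
    (A : Subgroup G) (hA : A.Normal) (hZA : Subgroup.center G ≤ A)
    (hAdiv : ∀ a ∈ A, ∀ k : ℕ, 0 < k →
      ∃ b ∈ A, ∃ z ∈ Subgroup.center G, b ^ k = a * z) :
    ∃ D : Subgroup G,
      (D : Set G) = {x : G | ∃ a ∈ A, ∃ d ∈ D₀, x = a ^ (2 * m) * d} ∧
      D.Normal ∧
      (∀ x ∈ D, ∀ k : ℕ, 0 < k → ∃ y ∈ D, y ^ k = x) :=
  stmt_13_general D₀ F₀ m hm hD₀c hsum hD₀div hF₀exp A hA hZA hAdiv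
end

section
/- Every infinite locally finite group has an infinite abelian subgroup (Hall–Kulatilaka–Kargapolov). As a consequence: if G is an infinite group in which every proper centralizer C_G(g) (for g non-central) is finite, then G is not locally finite. -/
/-- Assuming Hall–Kulatilaka–Kargapolov (every infinite locally finite group has an infinite
abelian subgroup): an infinite group with finite centre in which the centraliser of every
non-central element is finite is not locally finite. -/
theorem stmt_17 {G : Type u} [Group G] [Infinite G]
    (hkk : ∀ (H : Type u) (_ : Group H), Infinite H →
      (∀ s : Finset H, ((Subgroup.closure (s : Set H) : Subgroup H) : Set H).Finite) →
      ∃ A : Subgroup H, (∀ x ∈ A, ∀ y ∈ A, x * y = y * x) ∧ Infinite A)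
    (hcent : ∀ g : G, g ∉ Subgroup.center G →
      ((Subgroup.centralizer {g} : Subgroup G) : Set G).Finite)
    (hZ : ((Subgroup.center G : Subgroup G) : Set G).Finite) :
    ¬ ∀ s : Finset G, ((Subgroup.closure (s : Set G) : Subgroup G) : Set G).Finite := by
  intro hlf
  obtain ⟨A, hab, hA⟩ := hkk G ‹Group G› ‹Infinite G› hlf
  -- A is infinite, center is finite, hence some a ∈ A not in center
  have : ¬ ((A : Set G) ⊆ (Subgroup.center G : Set G)) := by
    intro hsub
    have : ((A : Set G)).Finite := hZ.subset hsub
    exact this.not_infinite ((Set.infinite_coe_iff).mp (by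
      rw [show ((A : Set G)) = (A : Set G) from rfl]
      exact (Subgroup.coe_toSubmonoid A ▸ (by
        have := hA
        exact Set.infinite_coe_iff.mpr (Set.infinite_coe_iff.mp (by exact this))))))
  obtain ⟨a, haA, haZ⟩ := Set.not_subset.mp this
  have hsub : (A : Set G) ⊆ (Subgroup.centralizer {a} : Set G) := by
    intro x hx
    exact Subgroup.mem_centralizer_iff.mpr (by
      intro y hy
      rcases hy with rfl
      exact (hab x hx y haA).symm)
  exact ((hcent a haZ).subset hsub).not_infinite (Set.infinite_coe_iff.mp hA)
end
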